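/- arXiv:1907.08351 — 2 statements merged into one kernel-verified Lean document; each statement's English description precedes it below -/
import Mathlib

section
/- M_0 is nonempty, totally ordered under the pointwise order, and every element of M_0 is a solution of (EL). -/
open scoped BigOperators

namespace FK

/-- The lattice `ℤ^n`. -/
abbrev Lat (n : ℕ) := Fin n → ℤ

/-- The `ℓ¹` norm on `ℤ^n`. -/
def latNorm {n : ℕ} (i : Lat n) : ℕ := ∑ k, (i k).natAbs

/-- The ball `B_0^r = {k ∈ ℤ^n : ‖k‖ ≤ r}`. -/
abbrev B0 (n r : ℕ) := {k : Lat n // latNorm k ≤ r}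

lemma B0.coord_mem {n r : ℕ} (k : B0 n r) (i : Fin n) :
    k.1 i ∈ Finset.Icc (-(r : ℤ)) (r : ℤ) := by
  have h1 : (k.1 i).natAbs ≤ latNorm k.1 :=
    Finset.single_le_sum (f := fun j => (k.1 j).natAbs) (fun _ _ => Nat.zero_le _)
      (Finset.mem_univ i)
  have h2 := k.2
  simp only [Finset.mem_Icc]
  omega

noncomputable instance B0.instFintype (n r : ℕ) : Fintype (B0 n r) :=
  Fintype.ofInjective
    (fun k : B0 n r => (fun i => (⟨k.1 i, B0.coord_mem k i⟩ : (Finset.Icc (-(r : ℤ)) (r : ℤ)))))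
    (fun a b h => Subtype.ext (funext fun i => congrArg Subtype.val (congrFun h i)))

/-- The center of the ball `B_0^r`. -/
def B0.zero (n r : ℕ) : B0 n r := ⟨0, by simp [latNorm]⟩

/-- The local potential `S_j(u) = s((i ↦ u(j+i))|_{B_0^r})`. -/
noncomputable def Spot {n r : ℕ} (s : (B0 n r → ℝ) → ℝ) (j : Lat n) (u : Lat n → ℝ) : ℝ :=
  s fun k => u (j + k.1)

/-- The partial derivative of `s : ℝ^{B_0^r} → ℝ` with respect to the coordinate `k`. -/
noncomputable def pder {n r : ℕ} (s : (B0 n r → ℝ) → ℝ) (k : B0 n r) (x : B0 n r → ℝ) : ℝ :=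
  deriv (fun t => s (Function.update x k t)) (x k)

/-- The partial derivative `∂_i S_j(u)` of `S_j` with respect to the variable `u(i)`. -/
noncomputable def pderS {n r : ℕ} (s : (B0 n r → ℝ) → ℝ) (i j : Lat n) (u : Lat n → ℝ) : ℝ :=
  deriv (fun t => Spot s j (Function.update u i t)) (u i)

/-- Conditions (S1)–(S3) on the potential, together with `C²` smoothness. -/
structure IsPotential (n r : ℕ) (s : (B0 n r → ℝ) → ℝ) : Prop where
  smooth : ContDiff ℝ 2 s
  periodic : ∀ x : B0 n r → ℝ, s (fun k => x k + 1) = s x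
  bddBelow : ∃ M : ℝ, ∀ x, M ≤ s x
  coercive : ∀ k j : B0 n r, latNorm (k.1 - j.1) = 1 →
    ∀ C : ℝ, ∃ R : ℝ, ∀ x : B0 n r → ℝ, R ≤ |x k - x j| → C ≤ s x
  cross_nonpos : ∀ k j : B0 n r, k ≠ j → ∀ x, pder (pder s j) k x ≤ 0
  cross_neg : ∀ j : B0 n r, latNorm j.1 = 1 → ∀ x, pder (pder s j) (B0.zero n r) x < 0

/-- `u` satisfies the Euler–Lagrange equation (EL) at the site `i`. -/
def SolvesAt {n r : ℕ} (s : (B0 n r → ℝ) → ℝ) (u : Lat n → ℝ) (i : Lat n) : Prop :=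
  ∑ k : B0 n r, pderS s i (i + k.1) u = 0

/-- `u` is a solution of the Euler–Lagrange equation (EL). -/
def IsSolution {n r : ℕ} (s : (B0 n r → ℝ) → ℝ) (u : Lat n → ℝ) : Prop :=
  ∀ i : Lat n, SolvesAt s u i

/-- The `m`-th standard basis vector of `ℤ^n` (`0`-indexed: `latE 0 = e_1`). -/
def latE {n : ℕ} (m : ℕ) : Lat n := fun k => if (k : ℕ) = m then 1 else 0

/-- The lattice point `T_i = (i,0,…,0)`. -/
def latT {n : ℕ} (i : ℤ) : Lat n := fun k => if (k : ℕ) = 0 then i else 0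

/-- The first coordinate index of `Fin (n+2)`. -/
def coord0 (n : ℕ) : Fin (n + 2) := ⟨0, by omega⟩

/-- The second coordinate index of `Fin (n+2)`. -/
def coord1 (n : ℕ) : Fin (n + 2) := ⟨1, by omega⟩

/-- Configurations of period one in every coordinate direction (the set `Γ_0`). -/
def fullyPeriodic {n : ℕ} (u : Lat n → ℝ) : Prop :=
  ∀ i : Lat n, ∀ k : Fin n, u (i + latE (k : ℕ)) = u i

noncomputable def J0 {n r : ℕ} (s : (B0 n r → ℝ) → ℝ) (u : Lat n → ℝ) : ℝ := Spot s 0 u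

noncomputable def c0 {n r : ℕ} (s : (B0 n r → ℝ) → ℝ) : ℝ :=
  sInf (J0 s '' {u | fullyPeriodic u})

def M0 {n r : ℕ} (s : (B0 n r → ℝ) → ℝ) : Set (Lat n → ℝ) :=
  {u | fullyPeriodic u ∧ J0 s u = c0 s}

/-- `v`, `w` form an adjacent (gap) pair of the set `A`:  `v < w` pointwise, both belong to
`A`, and no element of `A` lies strictly between them. -/
def Adjacent {n : ℕ} (A : Set (Lat n → ℝ)) (v w : Lat n → ℝ) : Prop :=
  v ∈ A ∧ w ∈ A ∧ (∀ i, v i < w i) ∧ ∀ u ∈ A, v ≤ u → u ≤ w → u = v ∨ u = w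

/-- Configurations of period one in the coordinate directions `2,…,n`. -/
def tailPeriodic {n : ℕ} (u : Lat n → ℝ) : Prop :=
  ∀ i : Lat n, ∀ k : Fin n, (k : ℕ) ≠ 0 → u (i + latE (k : ℕ)) = u i

/-- The set `Γ̂_1(v,w)`. -/
def Gamma1hat {n : ℕ} (v w : Lat n → ℝ) : Set (Lat n → ℝ) :=
  {u | tailPeriodic u ∧ v ≤ u ∧ u ≤ w}

noncomputable def J1i {n r : ℕ} (s : (B0 n r → ℝ) → ℝ) (i : ℤ) (u : Lat n → ℝ) : ℝ :=
  Spot s (latT i) u - c0 s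

noncomputable def J1pq {n r : ℕ} (s : (B0 n r → ℝ) → ℝ) (p q : ℤ) (u : Lat n → ℝ) : ℝ :=
  ∑ i ∈ Finset.Icc p q, J1i s i u

/-- The renormalized functional `J_1 = liminf_{p→-∞, q→∞} J_{1;p,q}`, as an extended real. -/
noncomputable def J1 {n r : ℕ} (s : (B0 n r → ℝ) → ℝ) (u : Lat n → ℝ) : EReal :=
  Filter.liminf (fun pq : ℤ × ℤ => ((J1pq s pq.1 pq.2 u : ℝ) : EReal))
    (Filter.atBot ×ˢ Filter.atTop)

/-- The filter `|i| → ∞` on `ℤ`. -/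
noncomputable def absAtTop : Filter ℤ := Filter.comap (fun i : ℤ => |i|) Filter.atTop

/-- The set `Γ_1(v,w)` of configurations heteroclinic in `i_1` from `v` to `w`. -/
def Gamma1 {n : ℕ} (v w : Lat n → ℝ) : Set (Lat n → ℝ) :=
  {u | u ∈ Gamma1hat v w ∧
    Filter.Tendsto (fun i : ℤ => |u (latT i) - v (latT i)|) Filter.atBot (nhds 0) ∧
    Filter.Tendsto (fun i : ℤ => |u (latT i) - w (latT i)|) Filter.atTop (nhds 0)}

noncomputable def c1 {n r : ℕ} (s : (B0 n r → ℝ) → ℝ) (v w : Lat n → ℝ) : EReal :=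
  sInf (J1 s '' Gamma1 v w)

def M1 {n r : ℕ} (s : (B0 n r → ℝ) → ℝ) (v w : Lat n → ℝ) : Set (Lat n → ℝ) :=
  {u ∈ Gamma1 v w | J1 s u = c1 s v w}

/-- The set `Γ_1(w,v)` of configurations heteroclinic in `i_1` from `w` down to `v`. -/
def Gamma1rev {n : ℕ} (v w : Lat n → ℝ) : Set (Lat n → ℝ) :=
  {u | u ∈ Gamma1hat v w ∧
    Filter.Tendsto (fun i : ℤ => |u (latT i) - w (latT i)|) Filter.atBot (nhds 0) ∧
    Filter.Tendsto (fun i : ℤ => |u (latT i) - v (latT i)|) Filter.atTop (nhds 0)}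

noncomputable def c1rev {n r : ℕ} (s : (B0 n r → ℝ) → ℝ) (v w : Lat n → ℝ) : EReal :=
  sInf (J1 s '' Gamma1rev v w)

def M1rev {n r : ℕ} (s : (B0 n r → ℝ) → ℝ) (v w : Lat n → ℝ) : Set (Lat n → ℝ) :=
  {u ∈ Gamma1rev v w | J1 s u = c1rev s v w}

/-- The set `Γ_1(v)`, for `v ∈ M_0`. -/
def Gamma1v {n : ℕ} (v : Lat n → ℝ) : Set (Lat n → ℝ) :=
  {u | u ∈ Gamma1hat (fun i => v i - 1) (fun i => v i + 1) ∧
    Filter.Tendsto (fun i : ℤ => |u (latT i) - v (latT i)|) absAtTop (nhds 0)}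

noncomputable def c1v {n r : ℕ} (s : (B0 n r → ℝ) → ℝ) (v : Lat n → ℝ) : EReal :=
  sInf (J1 s '' Gamma1v v)

def M1v {n r : ℕ} (s : (B0 n r → ℝ) → ℝ) (v : Lat n → ℝ) : Set (Lat n → ℝ) :=
  {u ∈ Gamma1v v | J1 s u = c1v s v}

/-! ### Periodic configurations with general periods (`Γ_0(l)` etc.) -/

def GammaPer {n : ℕ} (l : Fin n → ℕ) : Set (Lat n → ℝ) :=
  {u | ∀ i : Lat n, ∀ k : Fin n, u (i + (l k : ℤ) • latE (k : ℕ)) = u i}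

noncomputable def J0l {n r : ℕ} (s : (B0 n r → ℝ) → ℝ) (l : Fin n → ℕ) (u : Lat n → ℝ) : ℝ :=
  ∑ i ∈ Fintype.piFinset (fun k => Finset.Ico (0 : ℤ) (l k)), Spot s i u

noncomputable def c0l {n r : ℕ} (s : (B0 n r → ℝ) → ℝ) (l : Fin n → ℕ) : ℝ :=
  sInf (J0l s l '' GammaPer l)

def M0l {n r : ℕ} (s : (B0 n r → ℝ) → ℝ) (l : Fin n → ℕ) : Set (Lat n → ℝ) :=
  {u ∈ GammaPer l | J0l s l u = c0l s l}

/-! ### The `l`-periodic analogues of `Γ_1` (for Proposition 3.20) -/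

/-- The finite slice `{j | j_1 = i, 0 ≤ j_k < l_k (k ≥ 2)}`. -/
noncomputable def sliceBox {n : ℕ} (l : Fin n → ℕ) (i : ℤ) : Finset (Lat n) :=
  Fintype.piFinset fun k => if (k : ℕ) = 0 then {i} else Finset.Ico (0 : ℤ) (l k)

def tailPeriodicL {n : ℕ} (l : Fin n → ℕ) (u : Lat n → ℝ) : Prop :=
  ∀ i : Lat n, ∀ k : Fin n, (k : ℕ) ≠ 0 → u (i + (l k : ℤ) • latE (k : ℕ)) = u i

/-- `∏_{k=2}^{n} l_k`. -/
noncomputable def tailProd {n : ℕ} (l : Fin n → ℕ) : ℝ :=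
  ∏ k ∈ Finset.univ.filter (fun k : Fin n => (k : ℕ) ≠ 0), (l k : ℝ)

noncomputable def J1il {n r : ℕ} (s : (B0 n r → ℝ) → ℝ) (l : Fin n → ℕ) (i : ℤ)
    (u : Lat n → ℝ) : ℝ :=
  (∑ j ∈ sliceBox l i, Spot s j u) - tailProd l * c0 s

noncomputable def J1pql {n r : ℕ} (s : (B0 n r → ℝ) → ℝ) (l : Fin n → ℕ) (p q : ℤ)
    (u : Lat n → ℝ) : ℝ :=
  ∑ i ∈ Finset.Icc p q, J1il s l i u

noncomputable def J1l {n r : ℕ} (s : (B0 n r → ℝ) → ℝ) (l : Fin n → ℕ) (u : Lat n → ℝ) :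
    EReal :=
  Filter.liminf (fun pq : ℤ × ℤ => ((J1pql s l pq.1 pq.2 u : ℝ) : EReal))
    (Filter.atBot ×ˢ Filter.atTop)

def Gamma1hatL {n : ℕ} (l : Fin n → ℕ) (v w : Lat n → ℝ) : Set (Lat n → ℝ) :=
  {u | tailPeriodicL l u ∧ v ≤ u ∧ u ≤ w}

def Gamma1L {n : ℕ} (l : Fin n → ℕ) (v w : Lat n → ℝ) : Set (Lat n → ℝ) :=
  {u | u ∈ Gamma1hatL l v w ∧
    Filter.Tendsto (fun i : ℤ => ∑ j ∈ sliceBox l i, |u j - v j|) Filter.atBot (nhds 0) ∧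
    Filter.Tendsto (fun i : ℤ => ∑ j ∈ sliceBox l i, |u j - w j|) Filter.atTop (nhds 0)}

noncomputable def c1L {n r : ℕ} (s : (B0 n r → ℝ) → ℝ) (l : Fin n → ℕ) (v w : Lat n → ℝ) :
    EReal :=
  sInf (J1l s l '' Gamma1L l v w)

def M1L {n r : ℕ} (s : (B0 n r → ℝ) → ℝ) (l : Fin n → ℕ) (v w : Lat n → ℝ) :
    Set (Lat n → ℝ) :=
  {u ∈ Gamma1L l v w | J1l s l u = c1L s l v w}

/-! ### Minimal and Birkhoff configurations -/

/-- `u` is a (global) minimizer for the potentials `S_j`. -/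
def Minimal {n r : ℕ} (s : (B0 n r → ℝ) → ℝ) (u : Lat n → ℝ) : Prop :=
  ∀ B : Finset (Lat n), ∀ v : Lat n → ℝ,
    (∀ i : Lat n, v i ≠ 0 → i ∈ B ∧ ∀ k : Lat n, latNorm (k - i) ≤ r → k ∈ B) →
    ∑ j ∈ B, Spot s j u ≤ ∑ j ∈ B, Spot s j (u + v)

/-- `u` is Birkhoff: all its integer translates are comparable with `u`. -/
def Birkhoff {n : ℕ} (u : Lat n → ℝ) : Prop :=
  ∀ k : Fin n, ∀ j : ℤ,
    (∀ i, u (i + j • latE (k : ℕ)) < u i) ∨ (∀ i, u (i + j • latE (k : ℕ)) = u i) ∨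
      (∀ i, u i < u (i + j • latE (k : ℕ)))

/-! ### The second-order objects (`Γ̂_2`, `J_2`, `M_2`) -/

/-- Configurations of period one in the coordinate directions `3,…,n`. -/
def tailPeriodic2 {n : ℕ} (u : Lat n → ℝ) : Prop :=
  ∀ i : Lat n, ∀ k : Fin n, 2 ≤ (k : ℕ) → u (i + latE (k : ℕ)) = u i

/-- The set `Γ̂_2(v,w)`. -/
def Gamma2hat {n : ℕ} (v w : Lat n → ℝ) : Set (Lat n → ℝ) :=
  {u | tailPeriodic2 u ∧ v ≤ u ∧ u ≤ w}

/-- The row `E_i = {j ∈ ℤ^n : j_2 = i, j_3 = ⋯ = j_n = 0}`. -/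
def Erow (n : ℕ) (i : ℤ) : Set (Lat n) :=
  {j | (∀ k : Fin n, (k : ℕ) = 1 → j k = i) ∧ ∀ k : Fin n, 2 ≤ (k : ℕ) → j k = 0}

/-- `J_{2,i}(u) = J_1(τ²_{-i} u) - c_1 = ∑_{j ∈ E_0} [S_j(τ²_{-i}u) - S_j(v)]`, where `v` is the
base configuration. -/
noncomputable def J2i {n r : ℕ} (s : (B0 n r → ℝ) → ℝ) (v : Lat n → ℝ) (i : ℤ)
    (u : Lat n → ℝ) : ℝ :=
  ∑' j : Erow n 0, (Spot s j.1 (fun x => u (x + i • latE 1)) - Spot s j.1 v)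

noncomputable def J2pq {n r : ℕ} (s : (B0 n r → ℝ) → ℝ) (v : Lat n → ℝ) (p q : ℤ)
    (u : Lat n → ℝ) : ℝ :=
  ∑ i ∈ Finset.Icc p q, J2i s v i u

/-- The renormalized functional `J_2`, as an extended real. -/
noncomputable def J2 {n r : ℕ} (s : (B0 n r → ℝ) → ℝ) (v : Lat n → ℝ) (u : Lat n → ℝ) :
    EReal :=
  Filter.liminf (fun pq : ℤ × ℤ => ((J2pq s v pq.1 pq.2 u : ℝ) : EReal))
    (Filter.atBot ×ˢ Filter.atTop)

/-- The set `Γ_2(v,w)` of configurations heteroclinic in `i_2` from `v` to `w`. -/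
def Gamma2 {n : ℕ} (v w : Lat n → ℝ) : Set (Lat n → ℝ) :=
  {u | u ∈ Gamma2hat v w ∧
    Filter.Tendsto (fun i : ℤ => ∑' j : Erow n i, |u j.1 - v j.1|) Filter.atBot (nhds 0) ∧
    Filter.Tendsto (fun i : ℤ => ∑' j : Erow n i, |u j.1 - w j.1|) Filter.atTop (nhds 0)}

noncomputable def c2 {n r : ℕ} (s : (B0 n r → ℝ) → ℝ) (v w : Lat n → ℝ) : EReal :=
  sInf (J2 s v '' Gamma2 v w)

def M2 {n r : ℕ} (s : (B0 n r → ℝ) → ℝ) (v w : Lat n → ℝ) : Set (Lat n → ℝ) :=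
  {u ∈ Gamma2 v w | J2 s v u = c2 s v w}


/-! ### Auxiliary lemmas for Statement 1 -/

section Statement1Aux

variable {n r : ℕ}

lemma latNorm_neg (k : Lat n) : latNorm (-k) = latNorm k := by
  simp [latNorm]

/-- Negation on the ball `B_0^r`. -/
def negB (k : B0 n r) : B0 n r := ⟨-k.1, by rw [latNorm_neg]; exact k.2⟩

/-- Negation as an equivalence of `B_0^r`. -/
def negBEquiv (n r : ℕ) : B0 n r ≃ B0 n r where
  toFun := negB
  invFun := negB
  left_inv k := Subtype.ext (neg_neg _)
  right_inv k := Subtype.ext (neg_neg _)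

lemma fp_step {u : Lat n → ℝ} (hu : fullyPeriodic u) (m : ℤ) (k : Fin n) (i : Lat n) :
    u (i + m • latE (k : ℕ)) = u i := by
  induction m using Int.induction_on with
  | zero => simp
  | succ m ih =>
      have h1 : i + ((m : ℤ) + 1) • latE (k : ℕ)
          = (i + (m : ℤ) • latE (k : ℕ)) + latE (k : ℕ) := by
        rw [add_smul, one_smul, add_assoc]
      rw [h1, hu _ k, ih]
  | pred m ih =>
      have h2 := hu (i + (-(m : ℤ) - 1) • latE (k : ℕ)) k
      have h3 : i + (-(m : ℤ) - 1) • latE (k : ℕ) + latE (k : ℕ)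
          = i + (-(m : ℤ)) • latE (k : ℕ) := by
        rw [sub_smul, one_smul]; abel
      rw [h3] at h2
      rw [← h2]; exact ih

lemma fp_const {u : Lat n → ℝ} (hu : fullyPeriodic u) (i : Lat n) : u i = u 0 := by
  classical
  have key : ∀ S : Finset (Fin n), u (fun k => if k ∈ S then 0 else i k) = u i := by
    intro S
    induction S using Finset.induction_on with
    | empty => simp
    | @insert a S ha ih =>
        have heq : (fun k => if k ∈ insert a S then 0 else i k)
            = (fun k => if k ∈ S then 0 else i k) + (-(i a)) • latE (a : ℕ) := by
          funext k
          simp only [Finset.mem_insert, Pi.add_apply, Pi.smul_apply, latE, smul_eq_mul]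
          by_cases hk : k = a
          · subst hk
            simp [ha]
          · have hne : (k : ℕ) ≠ (a : ℕ) := fun h => hk (Fin.ext h)
            simp [hk, hne]
        rw [heq, fp_step hu, ih]
  have h := key Finset.univ
  have h0 : (fun k : Fin n => if k ∈ Finset.univ then (0 : ℤ) else i k) = (0 : Lat n) := by
    funext k; simp
  rw [h0] at h
  exact h.symm

lemma pder_eq {s : (B0 n r → ℝ) → ℝ} (hs : ContDiff ℝ 2 s) (k : B0 n r) (x : B0 n r → ℝ) :
    pder s k x = fderiv ℝ s x (Pi.single k 1 : B0 n r → ℝ) := by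
  classical
  have hd : Differentiable ℝ s := hs.differentiable two_ne_zero
  have h1 : HasDerivAt (fun t : ℝ => x + (t - x k) • (Pi.single k 1 : B0 n r → ℝ))
      (Pi.single k 1 : B0 n r → ℝ) (x k) := by
    have h0 : HasDerivAt (fun t : ℝ => t - x k) 1 (x k) := (hasDerivAt_id _).sub_const _
    simpa using (h0.smul_const (Pi.single k 1 : B0 n r → ℝ)).const_add x
  have h2 : HasDerivAt (fun t : ℝ => s (x + (t - x k) • (Pi.single k 1 : B0 n r → ℝ)))
      (fderiv ℝ s x (Pi.single k 1 : B0 n r → ℝ)) (x k) := by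
    have h3 := (hd (x + ((x k) - x k) • (Pi.single k 1 : B0 n r → ℝ))).hasFDerivAt.comp_hasDerivAt
      (x k) h1
    simpa [Function.comp_def] using h3
  have heq : (fun t : ℝ => s (Function.update x k t))
      = fun t : ℝ => s (x + (t - x k) • (Pi.single k 1 : B0 n r → ℝ)) := by
    funext t; congr 1; funext j
    rcases eq_or_ne j k with h | h
    · subst h; simp
    · simp [Function.update_apply, h, Pi.single_apply]
  rw [pder, heq, h2.deriv]

lemma hasDerivAt_phi {s : (B0 n r → ℝ) → ℝ} (hs : ContDiff ℝ 2 s) (c : ℝ) :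
    HasDerivAt (fun t : ℝ => s (fun _ => t))
      (∑ k : B0 n r, pder s k (fun _ => c)) c := by
  classical
  have hd : Differentiable ℝ s := hs.differentiable two_ne_zero
  have h1 : HasDerivAt (fun t : ℝ => (fun _ : B0 n r => t)) (fun _ => (1 : ℝ)) c := by
    rw [hasDerivAt_pi]; intro k; exact hasDerivAt_id c
  have h2 := (hd (fun _ => c)).hasFDerivAt.comp_hasDerivAt c h1
  have h3 : fderiv ℝ s (fun _ => c) (fun _ : B0 n r => (1 : ℝ))
      = ∑ k : B0 n r, pder s k (fun _ => c) := by
    have h4 : (fun _ : B0 n r => (1 : ℝ)) = ∑ k : B0 n r, (Pi.single k 1 : B0 n r → ℝ) :=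
      (Finset.univ_sum_single (fun _ : B0 n r => (1 : ℝ))).symm
    rw [h4, map_sum]
    exact Finset.sum_congr rfl fun k _ => (pder_eq hs k _).symm
  rw [← h3]
  simpa [Function.comp_def] using h2

end Statement1Aux

/-- `M_0` is nonempty, totally ordered, and consists of solutions of (EL). -/
theorem statement_1 (n r : ℕ) (s : (B0 (n + 2) (r + 1) → ℝ) → ℝ)
    (hs : IsPotential (n + 2) (r + 1) s) :
    (M0 s).Nonempty ∧ (∀ u ∈ M0 s, ∀ v ∈ M0 s, u ≤ v ∨ v ≤ u) ∧
      ∀ u ∈ M0 s, IsSolution s u := by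
  classical
  set φ : ℝ → ℝ := fun c => s (fun _ => c) with hφdef
  have hφc : Continuous φ := hs.smooth.continuous.comp (continuous_pi fun _ => continuous_id)
  have hper : ∀ t : ℝ, φ (t + 1) = φ t := fun t => hs.periodic (fun _ => t)
  have hperZ : ∀ (m : ℤ) (t : ℝ), φ (t + m) = φ t := by
    intro m
    induction m using Int.induction_on with
    | zero => simp
    | succ m ih =>
        intro t
        have h1 : t + (((m : ℤ) + 1 : ℤ) : ℝ) = (t + (m : ℤ)) + 1 := by push_cast; ring
        rw [h1, hper, ih]
    | pred m ih =>
        intro t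
        have h1 := hper (t + ((-(m : ℤ) - 1 : ℤ) : ℝ))
        have h2 : t + ((-(m : ℤ) - 1 : ℤ) : ℝ) + 1 = t + ((-(m : ℤ) : ℤ) : ℝ) := by
          push_cast; ring
        rw [h2] at h1
        rw [← h1]; exact ih t
  obtain ⟨c₀, hc₀mem, hc₀⟩ := isCompact_Icc.exists_isMinOn
    (Set.nonempty_Icc.mpr zero_le_one) hφc.continuousOn
  have hglob : ∀ t, φ c₀ ≤ φ t := by
    intro t
    have h1 : φ t = φ (Int.fract t) := by
      conv_lhs => rw [← Int.fract_add_floor t]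
      exact hperZ ⌊t⌋ (Int.fract t)
    rw [h1]
    exact isMinOn_iff.mp hc₀ _
      (Set.mem_Icc.mpr ⟨Int.fract_nonneg t, (Int.fract_lt_one t).le⟩)
  have hconstP : ∀ c : ℝ, fullyPeriodic (fun _ : Lat (n + 2) => c) := fun c i k => rfl
  have hmemA : ∀ c : ℝ, φ c ∈ J0 s '' {u | fullyPeriodic u} :=
    fun c => ⟨fun _ => c, hconstP c, rfl⟩
  obtain ⟨M, hM⟩ := hs.bddBelow
  have hbdd : BddBelow (J0 s '' {u | fullyPeriodic u}) := by
    refine ⟨M, ?_⟩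
    rintro x ⟨u, -, rfl⟩
    exact hM _
  have hJ0eq : ∀ u : Lat (n + 2) → ℝ, fullyPeriodic u → J0 s u = φ (u 0) := by
    intro u hu
    exact congrArg s (funext fun k => fp_const hu _)
  have hlb : ∀ x ∈ J0 s '' {u | fullyPeriodic u}, φ c₀ ≤ x := by
    rintro x ⟨u, hu, rfl⟩
    rw [hJ0eq u hu]; exact hglob _
  have hc0 : c0 s = φ c₀ :=
    le_antisymm (csInf_le hbdd (hmemA c₀)) (le_csInf ⟨_, hmemA c₀⟩ hlb)
  refine ⟨⟨fun _ => c₀, hconstP c₀, ?_⟩, ?_, ?_⟩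
  · rw [hc0]; rfl
  · intro u hu v hv
    rcases le_total (u 0) (v 0) with h | h
    · left; intro i; rw [fp_const hu.1 i, fp_const hv.1 i]; exact h
    · right; intro i; rw [fp_const hu.1 i, fp_const hv.1 i]; exact h
  · intro u hu i
    have hc : ∀ j, u j = u 0 := fun j => fp_const hu.1 j
    set c : ℝ := u 0 with hcdef
    have hmin : ∀ t, φ c ≤ φ t := by
      intro t
      have h1 : φ c = c0 s := by rw [← hJ0eq u hu.1]; exact hu.2
      rw [h1]; exact csInf_le hbdd (hmemA t)
    have hD : HasDerivAt φ (∑ k : B0 (n + 2) (r + 1), pder s k (fun _ => c)) c :=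
      hasDerivAt_phi hs.smooth c
    have hzero : ∑ k : B0 (n + 2) (r + 1), pder s k (fun _ => c) = 0 := by
      have hloc : IsLocalMin φ c := Filter.Eventually.of_forall hmin
      have h1 := hloc.deriv_eq_zero
      rw [hD.deriv] at h1
      exact h1
    have hterm : ∀ k : B0 (n + 2) (r + 1),
        pderS s i (i + k.1) u = pder s (negB k) (fun _ => c) := by
      intro k
      have key : ∀ t : ℝ,
          (fun m : B0 (n + 2) (r + 1) => Function.update u i t ((i + k.1) + m.1))
          = Function.update (fun _ => c) (negB k) t := by
        intro t; funext m
        rcases eq_or_ne m (negB k) with h | h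
        · subst h
          have h1 : (i + k.1) + (negB k).1 = i := by
            show i + k.1 + -k.1 = i
            abel
          rw [h1]; simp
        · have h1 : (i + k.1) + m.1 ≠ i := by
            intro hcon
            apply h
            apply Subtype.ext
            rw [add_assoc] at hcon
            have h2 : k.1 + m.1 = 0 := add_eq_left.mp hcon
            exact eq_neg_of_add_eq_zero_right h2
          rw [Function.update_apply, Function.update_apply, if_neg h1, if_neg h, hc]
      have heq : (fun t : ℝ => Spot s (i + k.1) (Function.update u i t))
          = fun t : ℝ => s (Function.update (fun _ : B0 (n + 2) (r + 1) => c) (negB k) t) := by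
        funext t
        show s _ = s _
        exact congrArg s (key t)
      show deriv (fun t : ℝ => Spot s (i + k.1) (Function.update u i t)) (u i)
          = deriv (fun t : ℝ =>
              s (Function.update (fun _ : B0 (n + 2) (r + 1) => c) (negB k) t)) c
      rw [heq, hc i]
    show ∑ k : B0 (n + 2) (r + 1), pderS s i (i + k.1) u = 0
    calc ∑ k : B0 (n + 2) (r + 1), pderS s i (i + k.1) u
        = ∑ k : B0 (n + 2) (r + 1), pder s (negB k) (fun _ => c) :=
          Finset.sum_congr rfl fun k _ => hterm k
      _ = ∑ k : B0 (n + 2) (r + 1), pder s k (fun _ => c) :=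
          Fintype.sum_equiv (negBEquiv (n + 2) (r + 1)) _ _ fun k => rfl
      _ = 0 := hzero

end FK
end

section
/- Let v, w ∈ M_0 with v < w. There is a constant K_1 = K_1(v, w) ≥ 0 such that J_{1;p,q}(u) ≥ −K_1 for every u ∈ Γ̂_1(v, w) and all integers p ≤ q. -/
open scoped BigOperators

namespace FK

section Calculus
variable {ι : Type*} [Fintype ι] [DecidableEq ι]

lemma hasDerivAt_update' (F : (ι → ℝ) → ℝ) (x : ι → ℝ) (k : ι)
    (hF : DifferentiableAt ℝ F x) :
    HasDerivAt (fun t => F (Function.update x k t)) (fderiv ℝ F x (Pi.single k 1)) (x k) := by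
  have heq : ∀ t : ℝ, Function.update x k t = x + (t - x k) • (Pi.single k 1 : ι → ℝ) := by
    intro t; funext i
    rcases eq_or_ne i k with h | h
    · subst h; simp
    · simp [Function.update_apply, h, Pi.single_apply, if_neg h]
  have hcurve : HasDerivAt (fun t : ℝ => x + (t - x k) • (Pi.single k 1 : ι → ℝ))
      (Pi.single k 1) (x k) := by
    have h1 : HasDerivAt (fun t : ℝ => t - x k) 1 (x k) := (hasDerivAt_id _).sub_const _
    have h2 := (h1.smul_const (Pi.single k 1 : ι → ℝ)).const_add x
    simpa using h2
  have hx : x + ((x k : ℝ) - x k) • (Pi.single k 1 : ι → ℝ) = x := by simp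
  have hF' : HasFDerivAt F (fderiv ℝ F x)
      ((fun t : ℝ => x + (t - x k) • (Pi.single k 1 : ι → ℝ)) (x k)) := by
    simpa [hx] using hF.hasFDerivAt
  have hcomp := hF'.comp_hasDerivAt (x k) hcurve
  have hfun : (fun t => F (Function.update x k t))
      = fun t => F (x + (t - x k) • (Pi.single k 1 : ι → ℝ)) := by
    funext t; rw [heq]
  rw [hfun]
  exact hcomp

lemma deriv_update' (F : (ι → ℝ) → ℝ) (x : ι → ℝ) (k : ι)
    (hF : DifferentiableAt ℝ F x) :
    deriv (fun t => F (Function.update x k t)) (x k) = fderiv ℝ F x (Pi.single k 1) :=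
  (hasDerivAt_update' F x k hF).deriv

variable (s : (ι → ℝ) → ℝ)

/-- directional derivative function -/
noncomputable def Dir (v : ι → ℝ) : (ι → ℝ) → ℝ := fun x => fderiv ℝ s x v

omit [DecidableEq ι] in
lemma contDiff_Dir (hs : ContDiff ℝ 2 s) (v : ι → ℝ) : ContDiff ℝ 1 (Dir s v) := by
  have h1 : ContDiff ℝ 1 (fderiv ℝ s) := hs.fderiv_right (by norm_num)
  exact (ContinuousLinearMap.apply ℝ ℝ v).contDiff.comp h1

omit [DecidableEq ι] in
lemma differentiable_Dir (hs : ContDiff ℝ 2 s) (v : ι → ℝ) : Differentiable ℝ (Dir s v) :=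
  (contDiff_Dir s hs v).differentiable (by norm_num)

lemma fderiv_Dir_single (hs : ContDiff ℝ 2 s) (j k : ι) (x : ι → ℝ) :
    fderiv ℝ (Dir s (Pi.single j 1)) x (Pi.single k 1)
      = deriv (fun t => deriv (fun t' => s (Function.update (Function.update x k t) j t'))
          (Function.update x k t j)) (x k) := by
  have h1 : ∀ y : ι → ℝ, deriv (fun t' => s (Function.update y j t')) (y j)
      = Dir s (Pi.single j 1) y :=
    fun y => deriv_update' s y j ((hs.differentiable (by norm_num)) y)
  simp only [h1]
  exact (deriv_update' (Dir s (Pi.single j 1)) x k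
    ((differentiable_Dir s hs _) x)).symm

lemma fderiv_Dir_nonpos (hs : ContDiff ℝ 2 s)
    (hcross : ∀ j k : ι, k ≠ j → ∀ x : ι → ℝ,
      fderiv ℝ (Dir s (Pi.single j 1)) x (Pi.single k 1) ≤ 0)
    (a b : ι → ℝ) (ha : ∀ i, 0 ≤ a i) (hb : ∀ i, 0 ≤ b i)
    (hd : ∀ i, a i = 0 ∨ b i = 0) (x : ι → ℝ) :
    fderiv ℝ (Dir s b) x a ≤ 0 := by
  have hb_dec : b = ∑ j, b j • (Pi.single j 1 : ι → ℝ) := by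
    have : ∀ j : ι, b j • (Pi.single j 1 : ι → ℝ) = Pi.single j (b j) := by
      intro j
      rw [← Pi.single_smul]
      norm_num
    simp only [this, Finset.univ_sum_single]
  have hDb_eq : Dir s b = fun y => ∑ j, b j • Dir s (Pi.single j 1) y := by
    funext y
    simp only [Dir]
    conv_lhs => rw [hb_dec]
    rw [map_sum]
    refine Finset.sum_congr rfl fun j _ => ?_
    rw [map_smul]
  have hfd : HasFDerivAt (Dir s b) (∑ j, b j • fderiv ℝ (Dir s (Pi.single j 1)) x) x := by
    rw [hDb_eq]
    exact HasFDerivAt.fun_sum fun j _ =>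
      (((differentiable_Dir s hs (Pi.single j 1)) x).hasFDerivAt).const_smul (b j)
  rw [hfd.fderiv]
  rw [ContinuousLinearMap.sum_apply]
  refine Finset.sum_nonpos fun j _ => ?_
  rw [ContinuousLinearMap.smul_apply]
  have ha_dec : a = ∑ k, a k • (Pi.single k 1 : ι → ℝ) := by
    have : ∀ k : ι, a k • (Pi.single k 1 : ι → ℝ) = Pi.single k (a k) := by
      intro k; rw [← Pi.single_smul]; norm_num
    simp only [this, Finset.univ_sum_single]
  have : (fderiv ℝ (Dir s (Pi.single j 1)) x) a
      = ∑ k, a k • (fderiv ℝ (Dir s (Pi.single j 1)) x (Pi.single k 1)) := by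
    conv_lhs => rw [ha_dec]
    rw [map_sum]
    exact Finset.sum_congr rfl fun k _ => by rw [map_smul]
  rw [this, Finset.smul_sum]
  refine Finset.sum_nonpos fun k _ => ?_
  rcases eq_or_ne (a k) 0 with h | h
  · simp [h]
  rcases eq_or_ne (b j) 0 with h' | h'
  · simp [h']
  have hkj : k ≠ j := by
    rintro rfl
    rcases hd k with h'' | h'' <;> [exact h h''; exact h' h'']
  have hc := hcross j k hkj x
  have := mul_nonpos_of_nonneg_of_nonpos (mul_nonneg (hb j) (ha k)) hc
  calc b j • a k • fderiv ℝ (Dir s (Pi.single j 1)) x (Pi.single k 1)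
      = (b j * a k) * fderiv ℝ (Dir s (Pi.single j 1)) x (Pi.single k 1) := by
        simp [smul_eq_mul]; ring
    _ ≤ 0 := this

lemma Dir_add_le (hs : ContDiff ℝ 2 s)
    (hcross : ∀ j k : ι, k ≠ j → ∀ x : ι → ℝ,
      fderiv ℝ (Dir s (Pi.single j 1)) x (Pi.single k 1) ≤ 0)
    (a b : ι → ℝ) (ha : ∀ i, 0 ≤ a i) (hb : ∀ i, 0 ≤ b i)
    (hd : ∀ i, a i = 0 ∨ b i = 0) (y : ι → ℝ) :
    Dir s b (y + a) ≤ Dir s b y := by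
  set φ : ℝ → ℝ := fun t => Dir s b (y + t • a) with hφ
  have hder : ∀ t : ℝ, HasDerivAt φ (fderiv ℝ (Dir s b) (y + t • a) a) t := by
    intro t
    have hcurve : HasDerivAt (fun t : ℝ => y + t • a) a t := by
      simpa using ((hasDerivAt_id t).smul_const a).const_add y
    exact ((differentiable_Dir s hs b (y + t • a)).hasFDerivAt).comp_hasDerivAt t hcurve
  have hanti : Antitone φ :=
    antitone_of_deriv_nonpos (fun t => (hder t).differentiableAt)
      (fun t => by rw [(hder t).deriv]; exact fderiv_Dir_nonpos s hs hcross a b ha hb hd _)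
  have := hanti (zero_le_one (α := ℝ))
  simpa [hφ] using this

lemma quad_ineq (hs : ContDiff ℝ 2 s)
    (hcross : ∀ j k : ι, k ≠ j → ∀ x : ι → ℝ,
      fderiv ℝ (Dir s (Pi.single j 1)) x (Pi.single k 1) ≤ 0)
    (z a b : ι → ℝ) (ha : ∀ i, 0 ≤ a i) (hb : ∀ i, 0 ≤ b i)
    (hd : ∀ i, a i = 0 ∨ b i = 0) :
    s (z + b + a) + s z ≤ s (z + a) + s (z + b) := by
  set g : ℝ → ℝ := fun τ => s (z + τ • b + a) - s (z + τ • b) with hg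
  have hder : ∀ τ : ℝ, HasDerivAt g (Dir s b (z + τ • b + a) - Dir s b (z + τ • b)) τ := by
    intro τ
    have hc1 : HasDerivAt (fun τ : ℝ => z + τ • b + a) b τ := by
      simpa using (((hasDerivAt_id τ).smul_const b).const_add z).add_const a
    have hc2 : HasDerivAt (fun τ : ℝ => z + τ • b) b τ := by
      simpa using ((hasDerivAt_id τ).smul_const b).const_add z
    have hds := hs.differentiable (by norm_num)
    have h1 := ((hds (z + τ • b + a)).hasFDerivAt).comp_hasDerivAt τ hc1
    have h2 := ((hds (z + τ • b)).hasFDerivAt).comp_hasDerivAt τ hc2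
    exact h1.sub h2
  have hanti : Antitone g :=
    antitone_of_deriv_nonpos (fun τ => (hder τ).differentiableAt)
      (fun τ => by
        rw [(hder τ).deriv]
        have := Dir_add_le s hs hcross a b ha hb hd (z + τ • b)
        have heq : z + τ • b + a = (z + τ • b) + a := rfl
        rw [heq]
        linarith)
  have h01 := hanti (zero_le_one (α := ℝ))
  simp only [hg, one_smul, zero_smul, add_zero] at h01
  linarith

lemma submodular (hs : ContDiff ℝ 2 s)
    (hcross : ∀ j k : ι, k ≠ j → ∀ x : ι → ℝ,
      fderiv ℝ (Dir s (Pi.single j 1)) x (Pi.single k 1) ≤ 0)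
    (x y : ι → ℝ) :
    s (fun i => max (x i) (y i)) + s (fun i => min (x i) (y i)) ≤ s x + s y := by
  set z : ι → ℝ := fun i => min (x i) (y i) with hz
  set a : ι → ℝ := fun i => x i - z i with hazz
  set b : ι → ℝ := fun i => y i - z i with hbzz
  have ha : ∀ i, 0 ≤ a i := fun i => by simp [hazz, hz, min_le_left]
  have hb : ∀ i, 0 ≤ b i := fun i => by simp [hbzz, hz, min_le_right]
  have hd : ∀ i, a i = 0 ∨ b i = 0 := by
    intro i
    rcases le_total (x i) (y i) with h | h
    · left; simp [hazz, hz, min_eq_left h]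
    · right; simp [hbzz, hz, min_eq_right h]
  have h1 : z + a = x := by funext i; simp [hazz]
  have h2 : z + b = y := by funext i; simp [hbzz]
  have h3 : z + b + a = fun i => max (x i) (y i) := by
    funext i
    have := min_add_max (x i) (y i)
    simp only [Pi.add_apply, hazz, hbzz, hz]
    linarith
  have := quad_ineq s hs hcross z a b ha hb hd
  rw [h3, h1, h2] at this
  linarith

end Calculus
section Comb

/-- fold extracting pointwise min and residues -/
noncomputable def go (a : ℤ → ℝ) : List (ℤ → ℝ) → (ℤ → ℝ) × List (ℤ → ℝ)
  | [] => (a, [])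
  | b :: l =>
      let r := go (fun j => min (a j) (b j)) l
      (r.1, (fun j => max (a j) (b j)) :: r.2)

lemma go_len (a : ℤ → ℝ) (l : List (ℤ → ℝ)) : (go a l).2.length = l.length := by
  induction l generalizing a with
  | nil => rfl
  | cons b l ih => simp [go, ih]

lemma go_energy (E : (ℤ → ℝ) → ℝ)
    (hE : ∀ f g : ℤ → ℝ, E (fun j => max (f j) (g j)) + E (fun j => min (f j) (g j))
      ≤ E f + E g)
    (a : ℤ → ℝ) (l : List (ℤ → ℝ)) :
    E (go a l).1 + ((go a l).2.map E).sum ≤ E a + (l.map E).sum := by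
  induction l generalizing a with
  | nil => simp [go]
  | cons b l ih =>
    simp only [go, List.map_cons, List.sum_cons]
    have h1 := ih (fun j => min (a j) (b j))
    have h2 := hE a b
    linarith

lemma go_multiset (a : ℤ → ℝ) (l : List (ℤ → ℝ)) (j : ℤ) :
    (go a l).1 j ::ₘ Multiset.map (fun g => g j) ((go a l).2 : Multiset (ℤ → ℝ))
      = a j ::ₘ Multiset.map (fun g => g j) (l : Multiset (ℤ → ℝ)) := by
  induction l generalizing a with
  | nil => simp [go]
  | cons b l ih =>
    simp only [go, ← Multiset.cons_coe, Multiset.map_cons]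
    have h1 := ih (fun j' => min (a j') (b j'))
    rw [Multiset.cons_swap]
    rw [h1]
    rcases le_total (a j) (b j) with h | h
    · simp only [max_eq_right h, min_eq_left h]
      exact Multiset.cons_swap _ _ _
    · rw [max_eq_left h, min_eq_right h, Multiset.cons_swap]

noncomputable def infW (μ : Multiset ℝ) : WithTop ℝ :=
  (μ.map ((↑·) : ℝ → WithTop ℝ)).inf

lemma infW_cons (x : ℝ) (μ : Multiset ℝ) : infW (x ::ₘ μ) = (x : WithTop ℝ) ⊓ infW μ := by
  simp [infW]

lemma go_fst_infW (a : ℤ → ℝ) (l : List (ℤ → ℝ)) (j : ℤ) :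
    ((go a l).1 j : WithTop ℝ)
      = infW (a j ::ₘ Multiset.map (fun g => g j) (l : Multiset (ℤ → ℝ))) := by
  induction l generalizing a with
  | nil => simp [go, infW]
  | cons b l ih =>
    simp only [go]
    rw [ih]
    simp only [← Multiset.cons_coe, Multiset.map_cons, infW_cons, WithTop.coe_min, inf_assoc]

/-- The main combinatorial lemma: a family of functions whose pointwise value multiset is
independent of the point has total energy at least `length * c0N`. -/
lemma family_energy_bound (E : (ℤ → ℝ) → ℝ)
    (hE : ∀ f g : ℤ → ℝ, E (fun j => max (f j) (g j)) + E (fun j => min (f j) (g j))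
      ≤ E f + E g)
    (c0N : ℝ) (hconst : ∀ g : ℤ → ℝ, (∀ j j' : ℤ, g j = g j') → c0N ≤ E g) :
    ∀ (N : ℕ) (h : List (ℤ → ℝ)), h.length = N →
      (∀ j j' : ℤ, Multiset.map (fun g => g j) (h : Multiset (ℤ → ℝ))
        = Multiset.map (fun g => g j') (h : Multiset (ℤ → ℝ))) →
      (N : ℝ) * c0N ≤ (h.map E).sum := by
  intro N
  induction N with
  | zero =>
    intro h hlen _
    rw [List.length_eq_zero_iff] at hlen
    subst hlen
    simp
  | succ N ih =>
    intro h hlen hmult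
    rcases h with _ | ⟨a, l⟩
    · simp at hlen
    have hlen' : l.length = N := by simpa using hlen
    -- min is constant
    have hminconst : ∀ j j' : ℤ, (go a l).1 j = (go a l).1 j' := by
      intro j j'
      have h1 := go_fst_infW a l j
      have h2 := go_fst_infW a l j'
      have h3 : (a j ::ₘ Multiset.map (fun g => g j) (l : Multiset (ℤ → ℝ)))
          = (a j' ::ₘ Multiset.map (fun g => g j') (l : Multiset (ℤ → ℝ))) := by
        have := hmult j j'
        simpa [Multiset.cons_coe] using this
      rw [h3] at h1
      rw [← h2] at h1
      exact_mod_cast h1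
    -- residues have invariant multisets
    have hres : ∀ j j' : ℤ, Multiset.map (fun g => g j) ((go a l).2 : Multiset (ℤ → ℝ))
        = Multiset.map (fun g => g j') ((go a l).2 : Multiset (ℤ → ℝ)) := by
      intro j j'
      have h1 := go_multiset a l j
      have h2 := go_multiset a l j'
      have h3 : (a j ::ₘ Multiset.map (fun g => g j) (l : Multiset (ℤ → ℝ)))
          = (a j' ::ₘ Multiset.map (fun g => g j') (l : Multiset (ℤ → ℝ))) := by
        have := hmult j j'
        simpa [Multiset.cons_coe] using this
      rw [h3, ← h2] at h1
      rw [hminconst j j'] at h1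
      exact (Multiset.cons_inj_right _).mp h1
    have hresbound := ih (go a l).2 (by rw [go_len]; exact hlen') hres
    have hgo := go_energy E hE a l
    have hmin := hconst (go a l).1 hminconst
    have : ((a :: l).map E).sum = E a + (l.map E).sum := by simp
    rw [this]
    push_cast
    linarith

end Comb
section Struct

variable {n : ℕ}

lemma shift_invar {u : Lat n → ℝ} {k : Fin n}
    (h : ∀ i : Lat n, u (i + latE (k : ℕ)) = u i) :
    ∀ (c : ℤ) (i : Lat n), u (i + c • latE (k : ℕ)) = u i := by
  intro c
  induction c using Int.induction_on with
  | zero => intro i; simp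
  | succ m ih =>
    intro i
    have he : i + ((m : ℤ) + 1) • latE (k : ℕ)
        = (i + (m : ℤ) • latE (k : ℕ)) + latE (k : ℕ) := by
      rw [add_smul, one_smul, add_assoc]
    rw [he, h, ih]
  | pred m ih =>
    intro i
    have h2 := h (i + (-(m : ℤ) - 1) • latE (k : ℕ))
    have he : i + (-(m : ℤ) - 1) • latE (k : ℕ) + latE (k : ℕ)
        = i + (-(m : ℤ)) • latE (k : ℕ) := by
      have : (-(m : ℤ) - 1) • (latE (k : ℕ) : Lat n) + latE (k : ℕ)
          = (-(m : ℤ) - 1 + 1) • (latE (k : ℕ) : Lat n) := by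
        rw [add_smul, one_smul]
      rw [add_assoc, this]
      norm_num
    rw [he] at h2
    rw [← h2, ih]

/-- measure of the tail coordinates -/
def tailMeas (j : Lat (n + 2)) : ℕ :=
  ∑ k ∈ Finset.univ.filter (fun k : Fin (n + 2) => (k : ℕ) ≠ 0), (j k).natAbs

lemma tail_eval {u : Lat (n + 2) → ℝ} (hu : tailPeriodic u) :
    ∀ j : Lat (n + 2), u j = u (latT (j 0)) := by
  suffices H : ∀ (m : ℕ) (j : Lat (n + 2)), tailMeas j ≤ m → u j = u (latT (j 0)) by
    intro j; exact H (tailMeas j) j le_rfl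
  intro m
  induction m with
  | zero =>
    intro j hj
    have hz : ∀ k : Fin (n + 2), (k : ℕ) ≠ 0 → j k = 0 := by
      intro k hk
      have := Finset.sum_eq_zero_iff.mp (Nat.le_zero.mp hj) k
        (Finset.mem_filter.mpr ⟨Finset.mem_univ _, hk⟩)
      omega
    have : j = latT (j 0) := by
      funext k
      rcases eq_or_ne ((k : ℕ)) 0 with h0 | h0
      · have hk0 : k = 0 := by
          apply Fin.ext
          simpa using h0
      
        subst hk0
        simp [latT]
      · rw [hz k h0]
        simp [latT, h0]
    rw [← this]
  | succ m ih =>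
    intro j hj
    by_cases hall : ∀ k : Fin (n + 2), (k : ℕ) ≠ 0 → j k = 0
    · refine ih j ?_
      have : tailMeas j = 0 := by
        refine Finset.sum_eq_zero fun k hk => ?_
        rw [hall k (Finset.mem_filter.mp hk).2]
        rfl
      omega
    · push_neg at hall
      obtain ⟨k, hk0, hkne⟩ := hall
      set j' : Lat (n + 2) := fun m' => if m' = k then 0 else j m' with hj'
      have hjj' : j = j' + (j k) • latE (k : ℕ) := by
        funext m'
        rcases eq_or_ne m' k with h | h
        · subst h
          simp [hj', latE]
        · have hval : (m' : ℕ) ≠ (k : ℕ) := fun hc => h (Fin.ext hc)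
          simp [hj', latE, h, hval]
      have h1 : u j = u j' := by
        rw [hjj']
        exact shift_invar (fun i => hu i k hk0) (j k) j'
      have h2 : j' 0 = j 0 := by
        have : (0 : Fin (n + 2)) ≠ k := by
          intro hc
          apply hk0
          rw [← hc]
          rfl
        simp [hj', this]
      have h3 : tailMeas j' ≤ m := by
        have hkmem : k ∈ Finset.univ.filter (fun k : Fin (n + 2) => (k : ℕ) ≠ 0) :=
          Finset.mem_filter.mpr ⟨Finset.mem_univ _, hk0⟩
        have e1 : tailMeas j = (j k).natAbs
            + ∑ m' ∈ (Finset.univ.filter (fun k : Fin (n + 2) => (k : ℕ) ≠ 0)).erase k,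
              (j m').natAbs := (Finset.add_sum_erase _ _ hkmem).symm
        have e2 : tailMeas j' = ∑ m' ∈ (Finset.univ.filter
            (fun k : Fin (n + 2) => (k : ℕ) ≠ 0)).erase k, (j m').natAbs := by
          rw [tailMeas, ← Finset.add_sum_erase _ _ hkmem]
          have : (j' k).natAbs = 0 := by simp [hj']
          rw [this, Nat.zero_add]
          refine Finset.sum_congr rfl fun m' hm' => ?_
          have : m' ≠ k := (Finset.mem_erase.mp hm').1
          simp [hj', this]
        have : 1 ≤ (j k).natAbs := by omega
        omega
      rw [h1, ih j' h3, h2]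

lemma fully_const {u : Lat (n + 2) → ℝ} (hu : fullyPeriodic u) :
    ∀ j : Lat (n + 2), u j = u 0 := by
  have htail : tailPeriodic u := fun i k _ => hu i k
  intro j
  rw [tail_eval htail j]
  have h0 : ∀ c : ℤ, latT c = (0 : Lat (n + 2)) + c • latE ((0 : Fin (n + 2)) : ℕ) := by
    intro c
    funext m
    rcases eq_or_ne ((m : ℕ)) 0 with h | h
    · simp [latT, latE, h]
    · simp [latT, latE, h]
  rw [h0]
  exact shift_invar (fun i => hu i 0) (j 0) 0

end Struct
section Sig

variable {n r : ℕ} (s : (B0 (n + 2) (r + 1) → ℝ) → ℝ)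

/-- the 1D reduced local energy -/
noncomputable def sig (f : ℤ → ℝ) (i : ℤ) : ℝ :=
  s fun k => f (i + k.1 0)

lemma sig_eq_spot {u : Lat (n + 2) → ℝ} (hu : tailPeriodic u) (i : ℤ) :
    sig s (fun c => u (latT c)) i = Spot s (latT i) u := by
  unfold sig Spot
  congr 1
  funext k
  rw [tail_eval hu (latT i + k.1)]
  have h0 : ((latT i + k.1 : Lat (n + 2))) 0 = i + k.1 0 := by simp [latT]
  rw [h0]

lemma sig_shift (f : ℤ → ℝ) (c i : ℤ) :
    sig s (fun j => f (j + c)) i = sig s f (i + c) := by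
  unfold sig
  congr 1
  funext k
  congr 1
  ring

lemma sig_period (f : ℤ → ℝ) {L : ℤ} (hf : ∀ j, f (j + L) = f j) (i : ℤ) :
    sig s f (i + L) = sig s f i := by
  unfold sig
  congr 1
  funext k
  rw [show i + L + k.1 0 = (i + k.1 0) + L by ring, hf]

lemma sig_const (f : ℤ → ℝ) (hconst : ∀ j j' : ℤ, f j = f j') (i : ℤ) :
    sig s f i = s fun _ => f 0 := by
  unfold sig
  congr 1
  funext k
  exact hconst _ _

lemma c0_le_const (hs : IsPotential (n + 2) (r + 1) s) (c : ℝ) :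
    c0 s ≤ s fun _ => c := by
  obtain ⟨M, hM⟩ := hs.bddBelow
  have hbdd : BddBelow (J0 s '' {u : Lat (n + 2) → ℝ | fullyPeriodic u}) := by
    refine ⟨M, ?_⟩
    rintro x ⟨u', _, rfl⟩
    exact hM _
  have hmem : (s fun _ => c) ∈ J0 s '' {u : Lat (n + 2) → ℝ | fullyPeriodic u} := by
    refine ⟨fun _ => c, fun i k => rfl, rfl⟩
  exact csInf_le hbdd hmem

lemma sig_submod (hs : IsPotential (n + 2) (r + 1) s) (f g : ℤ → ℝ) (i : ℤ) :
    sig s (fun j => max (f j) (g j)) i + sig s (fun j => min (f j) (g j)) i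
      ≤ sig s f i + sig s g i := by
  have hcross : ∀ j k : B0 (n + 2) (r + 1), k ≠ j → ∀ x : B0 (n + 2) (r + 1) → ℝ,
      fderiv ℝ (Dir s (Pi.single j 1)) x (Pi.single k 1) ≤ 0 := by
    intro j k hkj x
    rw [fderiv_Dir_single s hs.smooth j k x]
    exact hs.cross_nonpos k j hkj x
  exact submodular s hs.smooth hcross _ _

lemma sig_abs_le (hs : IsPotential (n + 2) (r + 1) s) {α β C : ℝ}
    (hC : ∀ x : B0 (n + 2) (r + 1) → ℝ, (∀ k, α ≤ x k ∧ x k ≤ β) → |s x| ≤ C)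
    (f : ℤ → ℝ) (hf : ∀ j, α ≤ f j ∧ f j ≤ β) (i : ℤ) : |sig s f i| ≤ C :=
  hC _ fun k => hf _

lemma exists_box_bound (hs : IsPotential (n + 2) (r + 1) s) (α β : ℝ) (hαβ : α ≤ β) :
    ∃ C : ℝ, 0 ≤ C ∧ ∀ x : B0 (n + 2) (r + 1) → ℝ,
      (∀ k, α ≤ x k ∧ x k ≤ β) → |s x| ≤ C := by
  have hcomp : IsCompact (Set.Icc (fun _ => α) (fun _ => β) :
      Set (B0 (n + 2) (r + 1) → ℝ)) := isCompact_Icc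
  obtain ⟨C, hC⟩ := hcomp.exists_bound_of_continuousOn
    (hs.smooth.continuous.continuousOn)
  refine ⟨max C 0, le_max_right _ _, fun x hx => ?_⟩
  have hxmem : x ∈ Set.Icc (fun _ => α) (fun _ => β) :=
    ⟨fun k => (hx k).1, fun k => (hx k).2⟩
  have := hC x hxmem
  rw [Real.norm_eq_abs] at this
  exact this.trans (le_max_left _ _)

end Sig

section Sums

lemma list_range_sum (ψ : ℕ → ℝ) (N : ℕ) :
    ((List.range N).map ψ).sum = ∑ t ∈ Finset.range N, ψ t := by
  induction N with
  | zero => simp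
  | succ N ih => rw [List.range_succ, Finset.sum_range_succ, ← ih]; simp

lemma sum_Icc_eq_range (g : ℤ → ℝ) (p q : ℤ) :
    ∑ i ∈ Finset.Icc p q, g i = ∑ t ∈ Finset.range (q + 1 - p).toNat, g (p + t) := by
  have hmap : Finset.Icc p q = (Finset.range (q + 1 - p).toNat).map
      ⟨fun t : ℕ => p + (t : ℤ), fun a b hab => Nat.cast_inj.mp (add_left_cancel hab)⟩ := by
    ext x
    simp only [Finset.mem_Icc, Finset.mem_map, Finset.mem_range,
      Function.Embedding.coeFn_mk]
    constructor
    · rintro ⟨h1, h2⟩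
      exact ⟨(x - p).toNat, by omega, by show p + ((x - p).toNat : ℤ) = x; omega⟩
    · rintro ⟨a, ha, rfl⟩
      show p ≤ p + (a : ℤ) ∧ p + (a : ℤ) ≤ q
      omega
  rw [hmap, Finset.sum_map]
  rfl

lemma sum_range_shift_one (φ : ℤ → ℝ) (N : ℕ) (hper : ∀ i, φ (i + N) = φ i) (q : ℤ) :
    ∑ t ∈ Finset.range N, φ (q + t + 1) = ∑ t ∈ Finset.range N, φ (q + t) := by
  have h1 := Finset.sum_range_succ (fun t : ℕ => φ (q + t)) N
  have h2 := Finset.sum_range_succ' (fun t : ℕ => φ (q + t)) N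
  have h3 : ∑ t ∈ Finset.range N, φ (q + ↑(t + 1))
      = ∑ t ∈ Finset.range N, φ (q + t + 1) := by
    refine Finset.sum_congr rfl fun t _ => ?_
    congr 1
    push_cast
    ring
  have h4 : φ (q + (N : ℤ)) = φ q := by rw [hper q]
  rw [h3] at h2
  rw [h2] at h1
  simp only [Nat.cast_zero, add_zero] at h1
  rw [h4] at h1
  linarith

lemma sum_range_shift (φ : ℤ → ℝ) (N : ℕ) (hper : ∀ i, φ (i + N) = φ i) :
    ∀ (c : ℕ) (p : ℤ),
      ∑ t ∈ Finset.range N, φ (p + t + c) = ∑ t ∈ Finset.range N, φ (p + t) := by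
  intro c
  induction c with
  | zero => intro p; simp
  | succ c ih =>
    intro p
    have h5 : ∑ t ∈ Finset.range N, φ (p + t + ↑(c + 1))
        = ∑ t ∈ Finset.range N, φ ((p + 1) + t + c) := by
      refine Finset.sum_congr rfl fun t _ => ?_
      congr 1
      push_cast
      ring
    have h6 : ∑ t ∈ Finset.range N, φ ((p + 1) + t)
        = ∑ t ∈ Finset.range N, φ (p + t + 1) := by
      refine Finset.sum_congr rfl fun t _ => ?_
      congr 1
      ring
    rw [h5, ih (p + 1), h6, sum_range_shift_one φ N hper p]

end Sums
section Rot

lemma range_succ_shift (φ : ℕ → ℝ) (L : ℕ) :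
    Multiset.map φ (Multiset.range (L + 1))
      = φ 0 ::ₘ Multiset.map (fun t => φ (t + 1)) (Multiset.range L) := by
  have hr : Multiset.range (L + 1) = ((List.range (L + 1) : List ℕ) : Multiset ℕ) := rfl
  rw [hr, List.range_succ_eq_map]
  simp only [← Multiset.cons_coe, Multiset.map_cons, Multiset.map_coe, List.map_map]
  rfl

lemma mult_rot (f : ℤ → ℝ) (L : ℕ) (hper : ∀ j : ℤ, f (j + L) = f j) (j : ℤ) :
    Multiset.map (fun t : ℕ => f (j + 1 + t)) (Multiset.range L)
      = Multiset.map (fun t : ℕ => f (j + t)) (Multiset.range L) := by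
  set φ : ℕ → ℝ := fun t => f (j + t) with hφ
  have h1 : Multiset.map φ (Multiset.range (L + 1))
      = φ L ::ₘ Multiset.map φ (Multiset.range L) := by
    rw [Multiset.range_succ, Multiset.map_cons]
  have h2 := range_succ_shift φ L
  have hL0 : φ L = φ 0 := by
    simp only [hφ]
    rw [hper j]
    norm_num
  rw [h1, hL0] at h2
  have h3 := (Multiset.cons_inj_right (φ 0)).mp h2.symm
  -- h3 : map (fun t => φ (t+1)) (range L) = map φ (range L)
  rw [← h3]
  refine Multiset.map_congr rfl fun t _ => ?_
  simp only [hφ]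
  congr 1
  push_cast
  ring

lemma window_mult_const (f : ℤ → ℝ) (L : ℕ) (hper : ∀ j : ℤ, f (j + L) = f j) :
    ∀ j j' : ℤ, Multiset.map (fun t : ℕ => f (j + t)) (Multiset.range L)
      = Multiset.map (fun t : ℕ => f (j' + t)) (Multiset.range L) := by
  suffices H : ∀ j : ℤ, Multiset.map (fun t : ℕ => f (j + t)) (Multiset.range L)
      = Multiset.map (fun t : ℕ => f ((0 : ℤ) + t)) (Multiset.range L) by
    intro j j'
    rw [H j, H j']
  intro j
  induction j using Int.induction_on with
  | zero => rfl
  | succ m ih =>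
    have hr := mult_rot f L hper m
    rw [← ih, ← hr]
  | pred m ih =>
    have hr := mult_rot f L hper (-(m : ℤ) - 1)
    calc Multiset.map (fun t : ℕ => f (-(m : ℤ) - 1 + t)) (Multiset.range L)
        = Multiset.map (fun t : ℕ => f (-(m : ℤ) - 1 + 1 + t)) (Multiset.range L) := hr.symm
      _ = Multiset.map (fun t : ℕ => f (-(m : ℤ) + t)) (Multiset.range L) := by
          refine Multiset.map_congr rfl fun t _ => ?_
          congr 1
          ring
      _ = Multiset.map (fun t : ℕ => f ((0 : ℤ) + t)) (Multiset.range L) := ih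

end Rot

/-- a uniform lower bound `-K_1` for `J_{1;p,q}` on `Γ̂_1(v,w)`. -/
theorem statement_3 (n r : ℕ) (s : (B0 (n + 2) (r + 1) → ℝ) → ℝ)
    (hs : IsPotential (n + 2) (r + 1) s) (v w : Lat (n + 2) → ℝ)
    (hv : v ∈ M0 s) (hw : w ∈ M0 s) (hvw : ∀ i, v i < w i) :
    ∃ K1 : ℝ, 0 ≤ K1 ∧ ∀ u ∈ Gamma1hat v w, ∀ p q : ℤ, p ≤ q → -K1 ≤ J1pq s p q u := by
  have hvc : ∀ j, v j = v 0 := fully_const hv.1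
  have hwc : ∀ j, w j = w 0 := fully_const hw.1
  set α := v 0 with hα
  set β := w 0 with hβ
  have hαβ : α < β := hvw 0
  have hc0 : c0 s = s fun _ => α := by
    rw [← hv.2]
    unfold J0 Spot
    congr 1
    funext k
    rw [hvc (0 + k.1)]
  have hc0le := c0_le_const s hs
  obtain ⟨C, hC0, hC⟩ := exists_box_bound s hs α β hαβ.le
  have hc0C : |c0 s| ≤ C := by
    rw [hc0]
    exact hC _ fun k => ⟨le_refl α, hαβ.le⟩
  obtain ⟨Rn, hRn⟩ : ∃ Rn : ℕ, Rn = r + 1 := ⟨r + 1, rfl⟩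
  refine ⟨8 * ((r : ℝ) + 1) * C, by positivity, ?_⟩
  intro u hu p q hpq
  obtain ⟨htail, hvu, huw⟩ := hu
  set f : ℤ → ℝ := fun c => u (latT c) with hf
  have hfm : ∀ c : ℤ, α ≤ f c ∧ f c ≤ β := by
    intro c
    constructor
    · have h := hvu (latT c)
      rwa [hvc (latT c)] at h
    · have h := huw (latT c)
      rwa [hwc (latT c)] at h
  obtain ⟨N0, hN0⟩ : ∃ N0 : ℕ, N0 = (q + 1 - p).toNat := ⟨_, rfl⟩
  have hN0' : (N0 : ℤ) = q + 1 - p := by omega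
  have hN0pos : 0 < N0 := by omega
  obtain ⟨Ln, hLn⟩ : ∃ Ln : ℕ, Ln = N0 + 2 * Rn := ⟨_, rfl⟩
  set f' : ℤ → ℝ :=
    fun j => if (j - p) % (Ln : ℤ) ≤ q - p then f (p + (j - p) % (Ln : ℤ)) else α with hf'
  have hf'per : ∀ j : ℤ, f' (j + (Ln : ℤ)) = f' j := by
    intro j
    have hmod : (j + (Ln : ℤ) - p) % (Ln : ℤ) = (j - p) % (Ln : ℤ) := by
      rw [show j + (Ln : ℤ) - p = (j - p) + (Ln : ℤ) * 1 by ring,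
        Int.add_mul_emod_self_left]
    simp only [hf', hmod]
  have hf'm : ∀ j : ℤ, α ≤ f' j ∧ f' j ≤ β := by
    intro j
    simp only [hf']
    split
    · exact hfm _
    · exact ⟨le_refl _, hαβ.le⟩
  have hf'eq : ∀ j : ℤ, p ≤ j → j ≤ q → f' j = f j := by
    intro j h1 h2
    have hmod : (j - p) % (Ln : ℤ) = j - p := Int.emod_eq_of_lt (by omega) (by omega)
    simp only [hf', hmod, if_pos (by omega : j - p ≤ q - p)]
    congr 1
    omega
  have hwin : ∀ k : B0 (n + 2) (r + 1), -(Rn : ℤ) ≤ k.1 0 ∧ k.1 0 ≤ (Rn : ℤ) := by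
    intro k
    have h := B0.coord_mem k 0
    simp only [Finset.mem_Icc] at h
    omega
  -- rewrite J1pq in terms of sig
  have hJ : J1pq s p q u
      = (∑ t ∈ Finset.range N0, sig s f (p + t)) - N0 * c0 s := by
    unfold J1pq J1i
    rw [Finset.sum_sub_distrib]
    congr 1
    · rw [sum_Icc_eq_range (fun i => Spot s (latT i) u) p q,
        show (q + 1 - p).toNat = N0 from by omega]
      exact Finset.sum_congr rfl fun t _ => (sig_eq_spot s htail (p + t)).symm
    · rw [Finset.sum_const, Int.card_Icc, show (q + 1 - p).toNat = N0 from by omega,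
        nsmul_eq_mul]
  have hper_sig : ∀ i : ℤ, sig s f' (i + (Ln : ℤ)) = sig s f' i :=
    fun i => sig_period s f' hf'per i
  -- the full-period lower bound via the submodular rearrangement
  have hfull : (Ln : ℝ) * c0 s ≤ ∑ t ∈ Finset.range Ln, sig s f' (p + t) := by
    set E : (ℤ → ℝ) → ℝ := fun g => ∑ t ∈ Finset.range Ln, sig s g (p + t) with hE
    have hEsub : ∀ g h : ℤ → ℝ,
        E (fun j => max (g j) (h j)) + E (fun j => min (g j) (h j)) ≤ E g + E h := by
      intro g h
      simp only [hE, ← Finset.sum_add_distrib]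
      exact Finset.sum_le_sum fun t _ => sig_submod s hs g h (p + t)
    have hEconst : ∀ g : ℤ → ℝ, (∀ j j' : ℤ, g j = g j') → (Ln : ℝ) * c0 s ≤ E g := by
      intro g hg
      have he : E g = (Ln : ℝ) * s (fun _ => g 0) := by
        simp only [hE]
        have h1 : ∑ t ∈ Finset.range Ln, sig s g (p + (t : ℤ))
            = ∑ _t ∈ Finset.range Ln, s (fun _ => g 0) :=
          Finset.sum_congr rfl fun t _ => sig_const s g hg (p + t)
        rw [h1, Finset.sum_const, Finset.card_range, nsmul_eq_mul]
      rw [he]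
      exact mul_le_mul_of_nonneg_left (hc0le (g 0)) (by positivity)
    set hlist : List (ℤ → ℝ) :=
      (List.range Ln).map (fun t : ℕ => fun j : ℤ => f' (j + t)) with hhl
    have hmm : ∀ j0 : ℤ, Multiset.map (fun g => g j0) (hlist : Multiset (ℤ → ℝ))
        = Multiset.map (fun t : ℕ => f' (j0 + t)) (Multiset.range Ln) := by
      intro j0
      simp only [hhl, Multiset.map_coe, List.map_map]
      rfl
    have hmult : ∀ j j' : ℤ,
        Multiset.map (fun g => g j) (hlist : Multiset (ℤ → ℝ))
          = Multiset.map (fun g => g j') (hlist : Multiset (ℤ → ℝ)) := by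
      intro j j'
      rw [hmm j, hmm j', window_mult_const f' Ln hf'per j j']
    have hGB := family_energy_bound E hEsub ((Ln : ℝ) * c0 s) hEconst Ln hlist
      (by simp [hhl]) hmult
    have hsum : (hlist.map E).sum = (Ln : ℝ) * ∑ t ∈ Finset.range Ln, sig s f' (p + t) := by
      rw [hhl, List.map_map, list_range_sum (E ∘ fun (t : ℕ) (j : ℤ) => f' (j + (t : ℤ))) Ln]
      have hterm : ∀ t ∈ Finset.range Ln,
          (E ∘ fun (t : ℕ) (j : ℤ) => f' (j + (t : ℤ))) t
            = ∑ i ∈ Finset.range Ln, sig s f' (p + i) := by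
        intro t _
        simp only [Function.comp_apply, hE]
        have h2 : ∑ i ∈ Finset.range Ln, sig s (fun j : ℤ => f' (j + (t : ℤ))) (p + (i : ℤ))
            = ∑ i ∈ Finset.range Ln, sig s f' (p + (i : ℤ) + (t : ℤ)) :=
          Finset.sum_congr rfl fun i _ => sig_shift s f' t (p + i)
        rw [h2]
        exact sum_range_shift (sig s f') Ln hper_sig t p
      rw [Finset.sum_congr rfl hterm, Finset.sum_const, Finset.card_range, nsmul_eq_mul]
    rw [hsum] at hGB
    have hLpos : (0 : ℝ) < (Ln : ℝ) := by
      have : 0 < Ln := by omega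
      exact_mod_cast this
    exact le_of_mul_le_mul_left hGB hLpos
  have habs : ∀ i : ℤ, |sig s f' i| ≤ C := fun i => sig_abs_le s hs hC f' hf'm i
  have habsf : ∀ i : ℤ, |sig s f i| ≤ C := fun i => sig_abs_le s hs hC f hfm i
  -- split off the buffer
  have hSb : (Ln : ℝ) * c0 s - 2 * Rn * C ≤ ∑ t ∈ Finset.range N0, sig s f' (p + t) := by
    have hsplit : ∑ t ∈ Finset.range Ln, sig s f' (p + t)
        = (∑ t ∈ Finset.range N0, sig s f' (p + t))
          + ∑ t ∈ Finset.range (2 * Rn), sig s f' (p + ((N0 + t : ℕ) : ℤ)) := by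
      rw [hLn]
      exact Finset.sum_range_add (fun t : ℕ => sig s f' (p + t)) N0 (2 * Rn)
    have hbuf : ∑ t ∈ Finset.range (2 * Rn), sig s f' (p + ((N0 + t : ℕ) : ℤ))
        ≤ 2 * Rn * C := by
      calc ∑ t ∈ Finset.range (2 * Rn), sig s f' (p + ((N0 + t : ℕ) : ℤ))
          ≤ ∑ _t ∈ Finset.range (2 * Rn), C :=
            Finset.sum_le_sum fun t _ => (abs_le.mp (habs _)).2
        _ = 2 * Rn * C := by
            rw [Finset.sum_const, Finset.card_range, nsmul_eq_mul]
            push_cast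
            ring
    linarith [hfull]
  -- edge comparison
  have hedge : (∑ t ∈ Finset.range N0, sig s f' (p + t)) - 2 * (2 * Rn) * C
      ≤ ∑ t ∈ Finset.range N0, sig s f (p + t) := by
    have key : ∀ t ∈ Finset.range N0,
        (if Rn ≤ t ∧ t + Rn + 1 ≤ N0 then (0 : ℝ) else -(2 * C))
          ≤ sig s f (p + t) - sig s f' (p + t) := by
      intro t _
      split_ifs with hcond
      · have heq : sig s f (p + t) = sig s f' (p + t) := by
          unfold sig
          congr 1
          funext k
          have hk := hwin k
          rw [hf'eq (p + t + k.1 0) (by omega) (by omega)]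
        rw [heq]
        simp
      · have h1 := abs_le.mp (habsf (p + t))
        have h2 := abs_le.mp (habs (p + t))
        linarith [h1.1, h1.2, h2.1, h2.2]
    have hsum1 := Finset.sum_le_sum key
    have hfilt : (Finset.range N0).filter (fun t => ¬(Rn ≤ t ∧ t + Rn + 1 ≤ N0))
        ⊆ Finset.range Rn ∪ Finset.Ico (N0 - Rn) N0 := by
      intro t ht
      simp only [Finset.mem_filter, Finset.mem_range, Finset.mem_union,
        Finset.mem_Ico, not_and, not_le] at *
      omega
    have hcard : (((Finset.range N0).filter
        (fun t => ¬(Rn ≤ t ∧ t + Rn + 1 ≤ N0))).card : ℝ) ≤ 2 * Rn := by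
      have h1 := Finset.card_le_card hfilt
      have h2 := Finset.card_union_le (Finset.range Rn) (Finset.Ico (N0 - Rn) N0)
      rw [Finset.card_range] at h2
      rw [Nat.card_Ico] at h2
      have : ((Finset.range N0).filter
          (fun t => ¬(Rn ≤ t ∧ t + Rn + 1 ≤ N0))).card ≤ 2 * Rn := by omega
      exact_mod_cast this
    have hsum2 : -(2 * (2 * Rn) * C)
        ≤ ∑ t ∈ Finset.range N0, (if Rn ≤ t ∧ t + Rn + 1 ≤ N0 then (0 : ℝ) else -(2 * C)) := by
      rw [Finset.sum_ite]
      simp only [Finset.sum_const, nsmul_eq_mul, mul_zero, zero_add]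
      nlinarith [hC0, hcard]
    have hsub : ∑ t ∈ Finset.range N0, (sig s f (p + t) - sig s f' (p + t))
        = (∑ t ∈ Finset.range N0, sig s f (p + t))
          - ∑ t ∈ Finset.range N0, sig s f' (p + t) := Finset.sum_sub_distrib _ _
    linarith
  -- final arithmetic
  rw [hJ]
  have hcast : (Ln : ℝ) = (N0 : ℝ) + 2 * Rn := by
    rw [hLn]
    push_cast
    ring
  have hRcast : ((Rn : ℝ)) = (r : ℝ) + 1 := by
    rw [hRn]
    push_cast
    ring
  have habsc := abs_le.mp hc0C
  have e2 : -(2 * (Rn : ℝ) * C) ≤ 2 * (Rn : ℝ) * c0 s := by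
    have hRpos : (0 : ℝ) ≤ (Rn : ℝ) := by positivity
    nlinarith [habsc.1]
  have e1 : (Ln : ℝ) * c0 s = (N0 : ℝ) * c0 s + 2 * (Rn : ℝ) * c0 s := by
    rw [hcast]
    ring
  rw [show (8 : ℝ) * ((r : ℝ) + 1) * C = 8 * (Rn : ℝ) * C from by rw [hRcast]]
  linarith [hSb, hedge, hfull]

end FK
end
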